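/- arXiv:2009.11259 — 4 statements merged into one kernel-verified Lean document; each statement's English description precedes it below -/
import Mathlib

section
/- Let r(y) := 1 + (1/4)(cos(2πy₁) − 2 sin(2πy₁)) sin(2πy₂) and let A(y) be the 2×2 diagonal matrix with entries a₁₁(y) = (1 − (1/2) sin(2πy₁) sin(2πy₂))/r(y), a₂₂(y) = (1 + (1/2) sin(2πy₁) sin(2πy₂))/r(y), a₁₂ = a₂₁ = 0. Then r is the invariant measure of A, namely: (i) ∂²₁₁(a₁₁ r)(y) + ∂²₂₂(a₂₂ r)(y) = 0 for every y ∈ ℝ²; (ii) r(y + k) = r(y) for every y ∈ ℝ² and k ∈ ℤ²; (iii) r(y) > 0 for every y ∈ ℝ²; (iv) ∫_Y r(y) dy = 1, where Y = [0,1]². -/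
/-
Since `a₁₁ r = 1 - ½ sin(2πy₁) sin(2πy₂)` and `a₂₂ r = 1 + ½ sin(2πy₁) sin(2πy₂)`,
and `sin(2π·)'' = -(2π)² sin(2π·)`, the two second derivatives are `±2π² sin(2πy₁) sin(2πy₂)` and
cancel. Positivity holds because `|(cos - 2 sin) sin| ≤ 3`, and the mass is `1` because `sin(2πy₂)`
integrates to zero over a period.
-/

/-- First partial derivative (w.r.t. the first variable) of a function of two real variables. -/
noncomputable def p1 (f : ℝ → ℝ → ℝ) : ℝ → ℝ → ℝ := fun x y => deriv (fun t => f t y) x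

/-- Second partial derivative (w.r.t. the second variable). -/
noncomputable def p2 (f : ℝ → ℝ → ℝ) : ℝ → ℝ → ℝ := fun x y => deriv (fun t => f x t) y

/-- The invariant measure `r`. -/
noncomputable def rr (y₁ y₂ : ℝ) : ℝ :=
  1 + (1/4) * (Real.cos (2 * Real.pi * y₁) - 2 * Real.sin (2 * Real.pi * y₁))
    * Real.sin (2 * Real.pi * y₂)

/-- Entry `a₁₁` of the `c`-bad matrix `A`. -/
noncomputable def a11 (y₁ y₂ : ℝ) : ℝ :=
  (1 - (1/2) * Real.sin (2 * Real.pi * y₁) * Real.sin (2 * Real.pi * y₂)) / rr y₁ y₂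

/-- Entry `a₂₂` of the `c`-bad matrix `A`. -/
noncomputable def a22 (y₁ y₂ : ℝ) : ℝ :=
  (1 + (1/2) * Real.sin (2 * Real.pi * y₁) * Real.sin (2 * Real.pi * y₂)) / rr y₁ y₂

open Real

lemma hasDerivAt_sin_mul (c x : ℝ) : HasDerivAt (fun s => sin (c * s)) (c * cos (c * x)) x := by
  simpa [mul_comm] using ((hasDerivAt_id x).const_mul c).sin

lemma hasDerivAt_cos_mul (c x : ℝ) :
    HasDerivAt (fun s => cos (c * s)) (-(c * sin (c * x))) x := by
  simpa [mul_comm] using ((hasDerivAt_id x).const_mul c).cos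

lemma deriv_deriv_const_add_mul_sin_mul (a b c x : ℝ) :
    deriv (deriv fun s => a + b * sin (c * s)) x = -(c ^ 2 * (b * sin (c * x))) := by
  have h : deriv (fun s => a + b * sin (c * s)) = fun s => b * (c * cos (c * s)) :=
    funext fun s => (((hasDerivAt_sin_mul c s).const_mul b).const_add a).deriv
  rw [h, (((hasDerivAt_cos_mul c x).const_mul c).const_mul b).deriv]
  ring

lemma integral_const_add_mul_sin_two_pi_mul (a b : ℝ) :
    ∫ t in (0:ℝ)..1, a + b * sin (2 * π * t) = a := by
  rw [intervalIntegral.integral_add intervalIntegrable_const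
      ((by fun_prop : Continuous fun t => b * sin (2 * π * t)).intervalIntegrable 0 1),
    intervalIntegral.integral_const_mul,
    intervalIntegral.integral_comp_mul_left (fun x => sin x) (by positivity : 2 * π ≠ 0)]
  simp [cos_two_pi]

lemma p1_p1_apply (f : ℝ → ℝ → ℝ) (x y : ℝ) :
    p1 (p1 f) x y = deriv (deriv fun s => f s y) x :=
  rfl

lemma p2_p2_apply (f : ℝ → ℝ → ℝ) (x y : ℝ) :
    p2 (p2 f) x y = deriv (deriv fun t => f x t) y :=
  rfl

lemma rr_pos (y₁ y₂ : ℝ) : 0 < rr y₁ y₂ := by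
  unfold rr
  nlinarith [neg_one_le_sin (2 * π * y₁), sin_le_one (2 * π * y₁),
    neg_one_le_sin (2 * π * y₂), sin_le_one (2 * π * y₂),
    neg_one_le_cos (2 * π * y₁), cos_le_one (2 * π * y₁)]

lemma rr_add_int (y₁ y₂ : ℝ) (k₁ k₂ : ℤ) : rr (y₁ + k₁) (y₂ + k₂) = rr y₁ y₂ := by
  have h (y : ℝ) (k : ℤ) : 2 * π * (y + k) = 2 * π * y + k * (2 * π) := by ring
  simp only [rr, h, sin_add_int_mul_two_pi, cos_add_int_mul_two_pi]

lemma integral_integral_rr : ∫ y₁ in (0:ℝ)..1, ∫ y₂ in (0:ℝ)..1, rr y₁ y₂ = 1 := by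
  simp [rr, integral_const_add_mul_sin_two_pi_mul]

lemma a11_mul_rr (s t : ℝ) :
    a11 s t * rr s t = 1 - 1 / 2 * sin (2 * π * s) * sin (2 * π * t) :=
  div_mul_cancel₀ _ (rr_pos s t).ne'

lemma a22_mul_rr (s t : ℝ) :
    a22 s t * rr s t = 1 + 1 / 2 * sin (2 * π * s) * sin (2 * π * t) :=
  div_mul_cancel₀ _ (rr_pos s t).ne'

lemma p1_p1_a11_mul_rr (y₁ y₂ : ℝ) :
    p1 (p1 fun s t => a11 s t * rr s t) y₁ y₂
      = (2 * π) ^ 2 * (1 / 2 * sin (2 * π * y₁) * sin (2 * π * y₂)) := by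
  have h : (fun s => a11 s y₂ * rr s y₂)
      = fun s => 1 + -(1 / 2 * sin (2 * π * y₂)) * sin (2 * π * s) :=
    funext fun s => by rw [a11_mul_rr]; ring
  rw [p1_p1_apply, h, deriv_deriv_const_add_mul_sin_mul]
  ring

lemma p2_p2_a22_mul_rr (y₁ y₂ : ℝ) :
    p2 (p2 fun s t => a22 s t * rr s t) y₁ y₂
      = -((2 * π) ^ 2 * (1 / 2 * sin (2 * π * y₁) * sin (2 * π * y₂))) := by
  have h : (fun t => a22 y₁ t * rr y₁ t)
      = fun t => 1 + 1 / 2 * sin (2 * π * y₁) * sin (2 * π * t) :=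
    funext (a22_mul_rr y₁)
  rw [p2_p2_apply, h, deriv_deriv_const_add_mul_sin_mul]

/-- `r` is the invariant measure of `A`: it satisfies `∂²₁₁(a₁₁ r) + ∂²₂₂(a₂₂ r) = 0`,
is `ℤ²`-periodic, positive, and has unit mass on the unit cell `Y = [0,1]²`. -/
theorem invariant_measure_of_c_bad_matrix :
    (∀ y₁ y₂ : ℝ,
        p1 (p1 (fun s t => a11 s t * rr s t)) y₁ y₂
          + p2 (p2 (fun s t => a22 s t * rr s t)) y₁ y₂ = 0) ∧
    (∀ (y₁ y₂ : ℝ) (k₁ k₂ : ℤ), rr (y₁ + k₁) (y₂ + k₂) = rr y₁ y₂) ∧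
    (∀ y₁ y₂ : ℝ, 0 < rr y₁ y₂) ∧
    (∫ y₁ in (0:ℝ)..1, ∫ y₂ in (0:ℝ)..1, rr y₁ y₂) = 1 := by
  refine ⟨fun y₁ y₂ => ?_, rr_add_int, rr_pos, integral_integral_rr⟩
  rw [p1_p1_a11_mul_rr, p2_p2_a22_mul_rr, add_neg_cancel]
end

section
/- Let r(y) := 1 + (1/4)(cos(2πy₁) − 2 sin(2πy₁)) sin(2πy₂) and let A(y) be the 2×2 diagonal matrix with entries a₁₁(y) = (1 − (1/2) sin(2πy₁) sin(2πy₂))/r(y), a₂₂(y) = (1 + (1/2) sin(2πy₁) sin(2πy₂))/r(y), a₁₂ = a₂₁ = 0. Define v¹¹(y) := −(sin(2πy₂)/(32π²)) cos(2πy₁), v²²(y) := −(sin(2πy₂)/(32π²)) (cos(2πy₁) − 4 sin(2πy₁)), and v¹² = v²¹ := 0. Then for every i,j ∈ {1,2}: (i) −(a₁₁(y) ∂²₁₁v^{ij}(y) + a₂₂(y) ∂²₂₂v^{ij}(y)) = a_{ij}(y) − δ_{ij} for all y ∈ ℝ², where δ_{ij} is the Kronecker delta; (ii) v^{ij}(y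 + k) = v^{ij}(y) for all y ∈ ℝ², k ∈ ℤ²; (iii) ∫_Y v^{ij}(y) dy = 0, where Y = [0,1]². -/
/-- The full (diagonal) matrix `A` with entries `a_{ij}`. -/
noncomputable def aMat : Fin 2 → Fin 2 → ℝ → ℝ → ℝ
  | 0, 0 => a11
  | 1, 1 => a22
  | _, _ => fun _ _ => 0

/-- The matrix `V = (v^{ij})` of corrector functions. -/
noncomputable def vv : Fin 2 → Fin 2 → ℝ → ℝ → ℝ
  | 0, 0 => fun y₁ y₂ =>
      -(Real.sin (2 * Real.pi * y₂) / (32 * Real.pi ^ 2)) * Real.cos (2 * Real.pi * y₁)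
  | 1, 1 => fun y₁ y₂ =>
      -(Real.sin (2 * Real.pi * y₂) / (32 * Real.pi ^ 2))
        * (Real.cos (2 * Real.pi * y₁) - 4 * Real.sin (2 * Real.pi * y₁))
  | _, _ => fun _ _ => 0

open Real

lemma deriv_sin_add_cos (ω a b : ℝ) :
    deriv (fun t => a * sin (ω * t) + b * cos (ω * t))
      = fun t => -(ω * b) * sin (ω * t) + ω * a * cos (ω * t) := by
  funext t
  have hω : HasDerivAt (fun t => ω * t) ω t := by simpa using (hasDerivAt_id t).const_mul ω
  have h := (hω.sin.const_mul a).add (hω.cos.const_mul b)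
  exact h.deriv.trans (by ring)

lemma deriv_deriv_sin_add_cos (ω a b : ℝ) :
    deriv (deriv fun t => a * sin (ω * t) + b * cos (ω * t))
      = fun t => -ω ^ 2 * (a * sin (ω * t) + b * cos (ω * t)) := by
  rw [deriv_sin_add_cos, deriv_sin_add_cos]
  funext t
  ring

lemma integral_sin_two_pi_mul : ∫ t in (0 : ℝ)..1, sin (2 * π * t) = 0 := by
  rw [intervalIntegral.integral_comp_mul_left sin (by positivity : (2 : ℝ) * π ≠ 0)]
  simp [integral_sin, cos_two_pi]

noncomputable def trigMode (ω a b : ℝ) (x y : ℝ) : ℝ :=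
  (a * sin (ω * x) + b * cos (ω * x)) * sin (ω * y)

section trigMode

variable (ω a b : ℝ)

lemma p1_p1_trigMode : p1 (p1 (trigMode ω a b)) = fun x y => -ω ^ 2 * trigMode ω a b x y := by
  funext x y
  have h := congrFun (deriv_deriv_sin_add_cos ω (a * sin (ω * y)) (b * sin (ω * y))) x
  simp only [p1, trigMode] at h ⊢
  convert h using 3 <;> first | (funext t; ring) | ring

lemma p2_p2_trigMode : p2 (p2 (trigMode ω a b)) = fun x y => -ω ^ 2 * trigMode ω a b x y := by
  funext x y
  have h := congrFun (deriv_deriv_sin_add_cos ω (a * sin (ω * x) + b * cos (ω * x)) 0) y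
  simp only [p2, trigMode] at h ⊢
  convert h using 3 <;> first | (funext t; ring) | ring

lemma trigMode_add_int (k₁ k₂ : ℤ) (x y : ℝ) :
    trigMode (2 * π) a b (x + k₁) (y + k₂) = trigMode (2 * π) a b x y := by
  simp only [trigMode, mul_add, mul_comm (2 * π) (k₁ : ℝ), mul_comm (2 * π) (k₂ : ℝ),
    sin_add_int_mul_two_pi, cos_add_int_mul_two_pi]

lemma integral_integral_trigMode :
    ∫ x in (0 : ℝ)..1, ∫ y in (0 : ℝ)..1, trigMode (2 * π) a b x y = 0 := by
  simp only [trigMode, intervalIntegral.integral_const_mul, integral_sin_two_pi_mul, mul_zero,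
    intervalIntegral.integral_zero]

end trigMode

lemma vv_eq_trigMode (i j : Fin 2) : ∃ a b, vv i j = trigMode (2 * π) a b := by
  fin_cases i <;> fin_cases j
  · exact ⟨0, -1 / (32 * π ^ 2), by funext x y; simp only [Fin.zero_eta, vv, trigMode]; ring⟩
  · exact ⟨0, 0, by funext x y; simp [vv, trigMode]⟩
  · exact ⟨0, 0, by funext x y; simp [vv, trigMode]⟩
  · exact ⟨4 / (32 * π ^ 2), -1 / (32 * π ^ 2), by funext x y; simp only [Fin.mk_one, vv, trigMode]; ring⟩

lemma a11_add_a22 (y₁ y₂ : ℝ) : a11 y₁ y₂ + a22 y₁ y₂ = 2 / rr y₁ y₂ := by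
  unfold a11 a22
  ring

lemma aMat_sub_kronecker (i j : Fin 2) (y₁ y₂ : ℝ) :
    aMat i j y₁ y₂ - (if i = j then 1 else 0) = 8 * π ^ 2 * vv i j y₁ y₂ / rr y₁ y₂ := by
  have hr := (rr_pos y₁ y₂).ne'
  have hπ := pi_ne_zero
  fin_cases i <;> fin_cases j
  · simp only [Fin.zero_eta, aMat, vv, a11, ↓reduceIte]
    field_simp
    unfold rr
    ring
  · simp [aMat, vv]
  · simp [aMat, vv]
  · simp only [Fin.mk_one, aMat, vv, a22, ↓reduceIte]
    field_simp
    unfold rr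
    ring

/-- The functions `v^{ij}` solve the periodic cell problems
`−A:D²v^{ij} = a_{ij} − δ_{ij}` (the effective matrix being the identity),
are `ℤ²`-periodic, and have zero mean over the unit cell `Y = [0,1]²`. -/
theorem correctors_of_c_bad_matrix :
    (∀ i j : Fin 2, ∀ y₁ y₂ : ℝ,
        -(a11 y₁ y₂ * p1 (p1 (vv i j)) y₁ y₂ + a22 y₁ y₂ * p2 (p2 (vv i j)) y₁ y₂)
          = aMat i j y₁ y₂ - (if i = j then 1 else 0)) ∧
    (∀ (i j : Fin 2) (y₁ y₂ : ℝ) (k₁ k₂ : ℤ),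
        vv i j (y₁ + k₁) (y₂ + k₂) = vv i j y₁ y₂) ∧
    (∀ i j : Fin 2, (∫ y₁ in (0:ℝ)..1, ∫ y₂ in (0:ℝ)..1, vv i j y₁ y₂) = 0) := by
  refine ⟨fun i j y₁ y₂ => ?_, fun i j y₁ y₂ k₁ k₂ => ?_, fun i j => ?_⟩ <;>
    obtain ⟨a, b, hv⟩ := vv_eq_trigMode i j
  · rw [aMat_sub_kronecker, hv, p1_p1_trigMode, p2_p2_trigMode]
    calc -(a11 y₁ y₂ * (-(2 * π) ^ 2 * trigMode (2 * π) a b y₁ y₂)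
            + a22 y₁ y₂ * (-(2 * π) ^ 2 * trigMode (2 * π) a b y₁ y₂))
        _ = 4 * π ^ 2 * (a11 y₁ y₂ + a22 y₁ y₂) * trigMode (2 * π) a b y₁ y₂ := by ring
        _ = 8 * π ^ 2 * trigMode (2 * π) a b y₁ y₂ / rr y₁ y₂ := by
          rw [a11_add_a22]; ring
  · rw [hv, trigMode_add_int]
  · rw [hv, integral_integral_trigMode]
end

section
/- Let r(y) := 1 + (1/4)(cos(2πy₁) − 2 sin(2πy₁)) sin(2πy₂), let A(y) be the 2×2 diagonal matrix with entries a₁₁(y) = (1 − (1/2) sin(2πy₁) sin(2πy₂))/r(y), a₂₂(y) = (1 + (1/2) sin(2πy₁) sin(2πy₂))/r(y), a₁₂ = a₂₁ = 0, and let A^{div}(y) be the 2×2 matrix with entries A^{div}₁₁(y) = 1 − (1/2) sin(2πy₁) sin(2πy₂), A^{div}₁₂(y) = (1/2) cos(2πy₁) cos(2πy₂), A^{div}₂₁(y) = −(1/2) cos(2πy₁) cos(2πy₂), A^{div}₂₂(y) = 1 + (1/2) sin(2πy₁) sin(2πy₂). Then for every twice continuously differentiable function u : ℝ² → ℝ and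 every y ∈ ℝ²: ∑_{i=1}^{2} ∂_i ( ∑_{j=1}^{2} A^{div}_{ij}(y) ∂_j u(y) ) = r(y) ( a₁₁(y) ∂²₁₁u(y) + a₂₂(y) ∂²₂₂u(y) ), i.e., ∇·(A^{div}∇u) = r A : D²u. -/
/-- Entry `A^{div}₁₁`. -/
noncomputable def Ad11 (y₁ y₂ : ℝ) : ℝ :=
  1 - (1/2) * Real.sin (2 * Real.pi * y₁) * Real.sin (2 * Real.pi * y₂)

/-- Entry `A^{div}₁₂`. -/
noncomputable def Ad12 (y₁ y₂ : ℝ) : ℝ :=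
  (1/2) * Real.cos (2 * Real.pi * y₁) * Real.cos (2 * Real.pi * y₂)

/-- Entry `A^{div}₂₁`. -/
noncomputable def Ad21 (y₁ y₂ : ℝ) : ℝ :=
  -((1/2) * Real.cos (2 * Real.pi * y₁) * Real.cos (2 * Real.pi * y₂))

/-- Entry `A^{div}₂₂`. -/
noncomputable def Ad22 (y₁ y₂ : ℝ) : ℝ :=
  1 + (1/2) * Real.sin (2 * Real.pi * y₁) * Real.sin (2 * Real.pi * y₂)

/-!
Expanding the divergence by the product rule gives `A^{div} : D²u` plus the divergences of the
columns of `A^{div}` paired with `∇u`. Both columns of `A^{div}` are divergence free, its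
off-diagonal part is antisymmetric and hence killed by the symmetric Hessian of `u`, and its
diagonal is `r` times the diagonal of `A`.
-/

open Function

section Slices

variable {F : Type*} [NormedAddCommGroup F] [NormedSpace ℝ F] {g : ℝ × ℝ → F}
  {g' : ℝ × ℝ →L[ℝ] F} {x y : ℝ}

theorem HasFDerivAt.hasDerivAt_slice_fst (hg : HasFDerivAt g g' (x, y)) :
    HasDerivAt (fun t => g (t, y)) (g' (1, 0)) x :=
  hg.comp_hasDerivAt x ((hasDerivAt_id x).prodMk (hasDerivAt_const x y))

theorem HasFDerivAt.hasDerivAt_slice_snd (hg : HasFDerivAt g g' (x, y)) :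
    HasDerivAt (fun t => g (x, t)) (g' (0, 1)) y :=
  hg.comp_hasDerivAt y ((hasDerivAt_const y x).prodMk (hasDerivAt_id y))

end Slices

theorem fderiv_clm_apply_const_apply {𝕜 E G F : Type*} [NontriviallyNormedField 𝕜]
    [NormedAddCommGroup E] [NormedSpace 𝕜 E] [NormedAddCommGroup G] [NormedSpace 𝕜 G]
    [NormedAddCommGroup F] [NormedSpace 𝕜 F] {c : E → G →L[𝕜] F} {p w : E} {v : G}
    (hc : DifferentiableAt 𝕜 c p) :
    fderiv 𝕜 (fun q => c q v) p w = fderiv 𝕜 c p w v := by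
  rw [fderiv_clm_apply hc (differentiableAt_const v)]
  simp

section PartialDerivatives

variable {f : ℝ → ℝ → ℝ} {x y : ℝ}

theorem hasDerivAt_p1 (hf : DifferentiableAt ℝ (uncurry f) (x, y)) :
    HasDerivAt (fun t => f t y) (p1 f x y) x :=
  hf.hasFDerivAt.hasDerivAt_slice_fst.differentiableAt.hasDerivAt

theorem hasDerivAt_p2 (hf : DifferentiableAt ℝ (uncurry f) (x, y)) :
    HasDerivAt (fun t => f x t) (p2 f x y) y :=
  hf.hasFDerivAt.hasDerivAt_slice_snd.differentiableAt.hasDerivAt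

theorem p1_eq_fderiv (hf : DifferentiableAt ℝ (uncurry f) (x, y)) :
    p1 f x y = fderiv ℝ (uncurry f) (x, y) (1, 0) :=
  hf.hasFDerivAt.hasDerivAt_slice_fst.deriv

theorem p2_eq_fderiv (hf : DifferentiableAt ℝ (uncurry f) (x, y)) :
    p2 f x y = fderiv ℝ (uncurry f) (x, y) (0, 1) :=
  hf.hasFDerivAt.hasDerivAt_slice_snd.deriv

theorem uncurry_p1_eq_fderiv (hf : Differentiable ℝ (uncurry f)) :
    uncurry (p1 f) = fun p => fderiv ℝ (uncurry f) p (1, 0) :=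
  funext fun _ => p1_eq_fderiv (hf _)

theorem uncurry_p2_eq_fderiv (hf : Differentiable ℝ (uncurry f)) :
    uncurry (p2 f) = fun p => fderiv ℝ (uncurry f) p (0, 1) :=
  funext fun _ => p2_eq_fderiv (hf _)

theorem ContDiff.uncurry_p1 {n : WithTop ℕ∞} (hf : ContDiff ℝ (n + 1) (uncurry f)) :
    ContDiff ℝ n (uncurry (p1 f)) := by
  rw [uncurry_p1_eq_fderiv (hf.differentiable (by simp))]
  exact (hf.fderiv_right le_rfl).clm_apply contDiff_const

theorem ContDiff.uncurry_p2 {n : WithTop ℕ∞} (hf : ContDiff ℝ (n + 1) (uncurry f)) :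
    ContDiff ℝ n (uncurry (p2 f)) := by
  rw [uncurry_p2_eq_fderiv (hf.differentiable (by simp))]
  exact (hf.fderiv_right le_rfl).clm_apply contDiff_const

theorem p2_p1_eq_p1_p2 (hf : ContDiff ℝ 2 (uncurry f)) : p2 (p1 f) x y = p1 (p2 f) x y := by
  have hf' : Differentiable ℝ (fderiv ℝ (uncurry f)) :=
    (hf.fderiv_right (m := 1) le_rfl).differentiable one_ne_zero
  rw [p2_eq_fderiv ((hf.uncurry_p1 (n := 1)).differentiable one_ne_zero _),
    p1_eq_fderiv ((hf.uncurry_p2 (n := 1)).differentiable one_ne_zero _),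
    uncurry_p1_eq_fderiv (hf.differentiable two_ne_zero),
    uncurry_p2_eq_fderiv (hf.differentiable two_ne_zero),
    fderiv_clm_apply_const_apply (hf' _), fderiv_clm_apply_const_apply (hf' _)]
  exact hf.contDiffAt.isSymmSndFDerivAt (by simp) _ _

end PartialDerivatives

section Divergence

variable {u b₁₁ b₁₂ b₂₁ b₂₂ : ℝ → ℝ → ℝ} {x y b₁₁' b₁₂' b₂₁' b₂₂' : ℝ}

theorem divergence_mul_grad_eq (hu : ContDiff ℝ 2 (uncurry u))
    (h₁₁ : HasDerivAt (fun s => b₁₁ s y) b₁₁' x) (h₁₂ : HasDerivAt (fun s => b₁₂ s y) b₁₂' x)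
    (h₂₁ : HasDerivAt (fun t => b₂₁ x t) b₂₁' y) (h₂₂ : HasDerivAt (fun t => b₂₂ x t) b₂₂' y) :
    p1 (fun s t => b₁₁ s t * p1 u s t + b₁₂ s t * p2 u s t) x y
        + p2 (fun s t => b₂₁ s t * p1 u s t + b₂₂ s t * p2 u s t) x y
      = b₁₁ x y * p1 (p1 u) x y + (b₁₂ x y + b₂₁ x y) * p1 (p2 u) x y
          + b₂₂ x y * p2 (p2 u) x y + (b₁₁' + b₂₁') * p1 u x y + (b₁₂' + b₂₂') * p2 u x y := by
  have hu₁ := ((hu.uncurry_p1 (n := 1)).differentiable one_ne_zero (x, y))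
  have hu₂ := ((hu.uncurry_p2 (n := 1)).differentiable one_ne_zero (x, y))
  have h₁ : HasDerivAt (fun s => b₁₁ s y * p1 u s y + b₁₂ s y * p2 u s y) _ x :=
    (h₁₁.mul (hasDerivAt_p1 hu₁)).add (h₁₂.mul (hasDerivAt_p1 hu₂))
  have h₂ : HasDerivAt (fun t => b₂₁ x t * p1 u x t + b₂₂ x t * p2 u x t) _ y :=
    (h₂₁.mul (hasDerivAt_p2 hu₁)).add (h₂₂.mul (hasDerivAt_p2 hu₂))
  rw [p1, p2, h₁.deriv, h₂.deriv, p2_p1_eq_p1_p2 hu]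
  ring

end Divergence

open Real

theorem hasDerivAt_sin_two_pi_mul (x : ℝ) :
    HasDerivAt (fun t => sin (2 * π * t)) (2 * π * cos (2 * π * x)) x := by
  simpa [mul_comm] using ((hasDerivAt_id x).const_mul (2 * π)).sin

theorem hasDerivAt_cos_two_pi_mul (x : ℝ) :
    HasDerivAt (fun t => cos (2 * π * t)) (-(2 * π * sin (2 * π * x))) x := by
  simpa [mul_comm] using ((hasDerivAt_id x).const_mul (2 * π)).cos

variable {x y : ℝ}

theorem hasDerivAt_Ad11_fst :
    HasDerivAt (fun s => Ad11 s y) (-(π * cos (2 * π * x) * sin (2 * π * y))) x :=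
  ((((hasDerivAt_sin_two_pi_mul x).const_mul (1 / 2)).mul_const _).const_sub 1).congr_deriv
    (by ring)

theorem hasDerivAt_Ad12_fst :
    HasDerivAt (fun s => Ad12 s y) (-(π * sin (2 * π * x) * cos (2 * π * y))) x :=
  (((hasDerivAt_cos_two_pi_mul x).const_mul (1 / 2)).mul_const _).congr_deriv (by ring)

theorem hasDerivAt_Ad21_snd :
    HasDerivAt (fun t => Ad21 x t) (π * cos (2 * π * x) * sin (2 * π * y)) y :=
  ((hasDerivAt_cos_two_pi_mul y).const_mul _).neg.congr_deriv (by ring)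

theorem hasDerivAt_Ad22_snd :
    HasDerivAt (fun t => Ad22 x t) (π * sin (2 * π * x) * cos (2 * π * y)) y :=
  (((hasDerivAt_sin_two_pi_mul y).const_mul _).const_add 1).congr_deriv (by ring)

theorem Ad12_add_Ad21 : Ad12 x y + Ad21 x y = 0 := add_neg_cancel _

theorem rr_pos_s5 : 0 < rr x y := by
  set c := cos (2 * π * x)
  set s := sin (2 * π * x)
  set S := sin (2 * π * y)
  have hcs : (c - 2 * s) ^ 2 ≤ 5 := by
    nlinarith [cos_sq_add_sin_sq (2 * π * x), sq_nonneg (2 * c + s)]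
  have hS : S ^ 2 ≤ 1 := sin_sq_le_one _
  have hprod : ((c - 2 * s) * S) ^ 2 ≤ 5 := by
    rw [mul_pow]
    nlinarith [sq_nonneg (c - 2 * s), sq_nonneg S]
  unfold rr
  nlinarith [sq_nonneg ((c - 2 * s) * S + 4)]

theorem rr_mul_a11 : rr x y * a11 x y = Ad11 x y := mul_div_cancel₀ _ rr_pos_s5.ne'

theorem rr_mul_a22 : rr x y * a22 x y = Ad22 x y := mul_div_cancel₀ _ rr_pos_s5.ne'

/-- For every twice continuously differentiable `u : ℝ² → ℝ` one has
`∇·(A^{div}∇u) = r (A : D²u)` pointwise. -/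
theorem divergence_form_reduction (u : ℝ → ℝ → ℝ)
    (hu : ContDiff ℝ 2 (Function.uncurry u)) :
    ∀ y₁ y₂ : ℝ,
      p1 (fun s t => Ad11 s t * p1 u s t + Ad12 s t * p2 u s t) y₁ y₂
        + p2 (fun s t => Ad21 s t * p1 u s t + Ad22 s t * p2 u s t) y₁ y₂
      = rr y₁ y₂ * (a11 y₁ y₂ * p1 (p1 u) y₁ y₂ + a22 y₁ y₂ * p2 (p2 u) y₁ y₂) := by
  intro y₁ y₂
  rw [divergence_mul_grad_eq hu hasDerivAt_Ad11_fst hasDerivAt_Ad12_fst hasDerivAt_Ad21_snd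
    hasDerivAt_Ad22_snd, Ad12_add_Ad21, mul_add, ← mul_assoc, ← mul_assoc, rr_mul_a11, rr_mul_a22]
  ring
end

section
/- Let n ≥ 1, Ω ⊆ ℝⁿ open, ε > 0. Let A : ℝⁿ → ℝ^{n×n} have symmetric values with entries a_{ij}, and let Ā ∈ ℝ^{n×n} be a constant symmetric matrix with entries ā_{ij}. Suppose: f : Ω → ℝ; uᵋ : Ω → ℝ is twice differentiable with −A(x/ε):D²uᵋ(x) = f(x) for all x ∈ Ω; u : Ω → ℝ is four times continuously differentiable with −Ā:D²u(x) = f(x) for all x ∈ Ω; for each k,l ∈ {1,…,n}, v^{kl} : ℝⁿ → ℝ is twice continuously differentiable with −A(y):D²v^{kl}(y) = a_{kl}(y) − ā_{kl} for all y ∈ ℝⁿ; and θᵋ : Ω → ℝ is twice differentiable with A(x/ε):D²θᵋ(x) = 0 for all x ∈ Ω. Define φᵋ(x) := ε² ( ∑_{k,l=1}^{n} v^{kl}(x/ε) ∂²_{kl}u(x) + θᵋ(x) ). Then for every x ∈ Ω: −A(x/ε):D²(uᵋ − u − φᵋ)(x) = ε ∑_{i,j,k,l=1}^{n} a_{ij}(x/ε)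 [ 2 ∂_i v^{kl}(x/ε) ∂³_{jkl}u(x) + ε v^{kl}(x/ε) ∂⁴_{ijkl}u(x) ]. -/
/-! Differentiating `φᵋ` twice by the product and chain rules, each derivative falling on
`v^{kl}(·/ε)` costs a factor `ε⁻¹`, so `−A(x/ε):D²(uᵋ − u − φᵋ)` splits into terms of order
`ε⁰`, `ε¹` and `ε²`. At order `ε⁰` the cell problem turns `∑ A:D²v^{kl} ∂²_{kl}u` into
`(Ā − A):D²u`, which cancels against the equations of `uᵋ` and `u`, and `θᵋ` drops out since
`A(x/ε):D²θᵋ = 0`. At order `ε¹` the two mixed terms `∂_i v^{kl} ∂³_{jkl}u` and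
`∂_j v^{kl} ∂³_{ikl}u` coincide by the symmetry of `A`. -/

/-- The partial derivative `∂_i f` of `f : ℝⁿ → ℝ`, as the Fréchet derivative applied to the
`i`-th standard basis vector. -/
noncomputable def pd {n : ℕ} (i : Fin n) (f : (Fin n → ℝ) → ℝ) : (Fin n → ℝ) → ℝ :=
  fun x => fderiv ℝ f x (Pi.single i 1)

/-- `f` is twice differentiable on `Ω`: it is differentiable on `Ω` and so are all its first
partial derivatives. -/
def TwiceDiffOn {n : ℕ} (f : (Fin n → ℝ) → ℝ) (Ω : Set (Fin n → ℝ)) : Prop :=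
  DifferentiableOn ℝ f Ω ∧ ∀ i : Fin n, DifferentiableOn ℝ (pd i f) Ω

open Finset

section PartialDerivatives

variable {n : ℕ} {i j : Fin n} {f g : (Fin n → ℝ) → ℝ} {x : Fin n → ℝ} {Ω : Set (Fin n → ℝ)}

lemma pd_add (hf : DifferentiableAt ℝ f x) (hg : DifferentiableAt ℝ g x) :
    pd i (fun y => f y + g y) x = pd i f x + pd i g x := by
  simp [pd, fderiv_fun_add hf hg]

lemma pd_sub (hf : DifferentiableAt ℝ f x) (hg : DifferentiableAt ℝ g x) :
    pd i (fun y => f y - g y) x = pd i f x - pd i g x := by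
  simp [pd, fderiv_fun_sub hf hg]

lemma pd_const_mul (c : ℝ) : pd i (fun y => c * f y) x = c * pd i f x := by
  simp [pd, ← smul_eq_mul, ← Pi.smul_def, fderiv_const_smul_field]

lemma pd_mul (hf : DifferentiableAt ℝ f x) (hg : DifferentiableAt ℝ g x) :
    pd i (fun y => f y * g y) x = pd i f x * g x + f x * pd i g x := by
  simp only [pd, fderiv_fun_mul hf hg, add_apply, smul_apply, smul_eq_mul]
  ring

lemma pd_sum {ι : Type*} (s : Finset ι) {F : ι → (Fin n → ℝ) → ℝ}
    (hF : ∀ a ∈ s, DifferentiableAt ℝ (F a) x) :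
    pd i (fun y => ∑ a ∈ s, F a y) x = ∑ a ∈ s, pd i (F a) x := by
  simp [pd, fderiv_fun_sum hF]

lemma pd_comp_smul (c : ℝ) : pd i (fun y => f (c • y)) x = c * pd i f (c • x) := by
  simp [pd, fderiv_comp_smul (f := f) c]

lemma pd_congr (hΩ : IsOpen Ω) (hx : x ∈ Ω) (h : Set.EqOn f g Ω) : pd i f x = pd i g x := by
  rw [pd, pd, (Filter.eventuallyEq_of_mem (hΩ.mem_nhds hx) h).fderiv_eq]

lemma contDiffOn_pd {m : ℕ} (hΩ : IsOpen Ω) (hf : ContDiffOn ℝ (m + 1) f Ω) :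
    ContDiffOn ℝ m (pd i f) Ω := by
  have hDf := hf.fderiv_of_isOpen hΩ le_rfl
  exact (ContinuousLinearMap.apply ℝ ℝ (Pi.single i 1)).contDiff.comp_contDiffOn hDf

end PartialDerivatives

namespace TwiceDiffOn

variable {n : ℕ} {i j : Fin n} {f g : (Fin n → ℝ) → ℝ} {x : Fin n → ℝ} {Ω : Set (Fin n → ℝ)}

lemma differentiableAt (hf : TwiceDiffOn f Ω) (hΩ : IsOpen Ω) (hx : x ∈ Ω) :
    DifferentiableAt ℝ f x :=
  hf.1.differentiableAt (hΩ.mem_nhds hx)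

lemma differentiableAt_pd (hf : TwiceDiffOn f Ω) (hΩ : IsOpen Ω) (hx : x ∈ Ω) :
    DifferentiableAt ℝ (pd j f) x :=
  (hf.2 j).differentiableAt (hΩ.mem_nhds hx)

lemma add (hΩ : IsOpen Ω) (hf : TwiceDiffOn f Ω) (hg : TwiceDiffOn g Ω) :
    TwiceDiffOn (fun y => f y + g y) Ω :=
  ⟨hf.1.add hg.1, fun _ => ((hf.2 _).add (hg.2 _)).congr fun _ hy =>
    pd_add (hf.differentiableAt hΩ hy) (hg.differentiableAt hΩ hy)⟩

lemma sub (hΩ : IsOpen Ω) (hf : TwiceDiffOn f Ω) (hg : TwiceDiffOn g Ω) :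
    TwiceDiffOn (fun y => f y - g y) Ω :=
  ⟨hf.1.sub hg.1, fun _ => ((hf.2 _).sub (hg.2 _)).congr fun _ hy =>
    pd_sub (hf.differentiableAt hΩ hy) (hg.differentiableAt hΩ hy)⟩

lemma const_mul (c : ℝ) (hf : TwiceDiffOn f Ω) : TwiceDiffOn (fun y => c * f y) Ω :=
  ⟨hf.1.const_mul c, fun _ => ((hf.2 _).const_mul c).congr fun _ _ => pd_const_mul c⟩

end TwiceDiffOn

section SecondPartialDerivatives

variable {n : ℕ} {i j : Fin n} {f g : (Fin n → ℝ) → ℝ} {x : Fin n → ℝ} {Ω : Set (Fin n → ℝ)}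

lemma ContDiffOn.twiceDiffOn (hΩ : IsOpen Ω) (hf : ContDiffOn ℝ 2 f Ω) : TwiceDiffOn f Ω :=
  ⟨hf.differentiableOn (by norm_num),
    fun _ => (contDiffOn_pd (m := 1) hΩ hf).differentiableOn one_ne_zero⟩

lemma pd_pd_add (hΩ : IsOpen Ω) (hx : x ∈ Ω) (hf : TwiceDiffOn f Ω) (hg : TwiceDiffOn g Ω) :
    pd i (pd j (fun y => f y + g y)) x = pd i (pd j f) x + pd i (pd j g) x := by
  rw [pd_congr hΩ hx fun y hy => pd_add (hf.differentiableAt hΩ hy) (hg.differentiableAt hΩ hy)]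
  exact pd_add (hf.differentiableAt_pd hΩ hx) (hg.differentiableAt_pd hΩ hx)

lemma pd_pd_sub (hΩ : IsOpen Ω) (hx : x ∈ Ω) (hf : TwiceDiffOn f Ω) (hg : TwiceDiffOn g Ω) :
    pd i (pd j (fun y => f y - g y)) x = pd i (pd j f) x - pd i (pd j g) x := by
  rw [pd_congr hΩ hx fun y hy => pd_sub (hf.differentiableAt hΩ hy) (hg.differentiableAt hΩ hy)]
  exact pd_sub (hf.differentiableAt_pd hΩ hx) (hg.differentiableAt_pd hΩ hx)

lemma pd_pd_const_mul (c : ℝ) : pd i (pd j (fun y => c * f y)) x = c * pd i (pd j f) x := by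
  rw [show pd j (fun y => c * f y) = fun y => c * pd j f y from funext fun _ => pd_const_mul c]
  exact pd_const_mul c

lemma pd_pd_sum {ι : Type*} (hΩ : IsOpen Ω) (hx : x ∈ Ω) (s : Finset ι)
    {F : ι → (Fin n → ℝ) → ℝ} (hF : ∀ a ∈ s, TwiceDiffOn (F a) Ω) :
    pd i (pd j (fun y => ∑ a ∈ s, F a y)) x = ∑ a ∈ s, pd i (pd j (F a)) x := by
  rw [pd_congr hΩ hx fun y hy => pd_sum s fun a ha => (hF a ha).differentiableAt hΩ hy]
  exact pd_sum s fun a ha => (hF a ha).differentiableAt_pd hΩ hx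

lemma pd_pd_mul (hΩ : IsOpen Ω) (hx : x ∈ Ω) (hf : TwiceDiffOn f Ω) (hg : TwiceDiffOn g Ω) :
    pd i (pd j (fun y => f y * g y)) x =
      pd i (pd j f) x * g x + pd j f x * pd i g x + pd i f x * pd j g x
        + f x * pd i (pd j g) x := by
  have hf₁ := hf.differentiableAt_pd (j := j) hΩ hx
  have hg₁ := hg.differentiableAt_pd (j := j) hΩ hx
  have hf₀ := hf.differentiableAt hΩ hx
  have hg₀ := hg.differentiableAt hΩ hx
  rw [pd_congr hΩ hx fun y hy => pd_mul (hf.differentiableAt hΩ hy) (hg.differentiableAt hΩ hy),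
    pd_add (hf₁.fun_mul hg₀) (hf₀.fun_mul hg₁), pd_mul hf₁ hg₀, pd_mul hf₀ hg₁]
  ring

lemma pd_pd_comp_smul (c : ℝ) :
    pd i (pd j (fun y => f (c • y))) x = c ^ 2 * pd i (pd j f) (c • x) := by
  rw [show pd j (fun y => f (c • y)) = fun y => c * pd j f (c • y) from
      funext fun _ => pd_comp_smul c,
    pd_const_mul c, pd_comp_smul c]
  ring

end SecondPartialDerivatives

section TwoScale

variable {n : ℕ} {i j : Fin n} {x : Fin n → ℝ} {Ω : Set (Fin n → ℝ)}

lemma pd_pd_mul_comp_smul (hΩ : IsOpen Ω) (hx : x ∈ Ω) (c : ℝ) {v g : (Fin n → ℝ) → ℝ}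
    (hv : ContDiff ℝ 2 v) (hg : TwiceDiffOn g Ω) :
    pd i (pd j (fun y => v (c • y) * g y)) x =
      c ^ 2 * pd i (pd j v) (c • x) * g x
        + c * (pd j v (c • x) * pd i g x + pd i v (c • x) * pd j g x)
        + v (c • x) * pd i (pd j g) x := by
  have hvc : TwiceDiffOn (fun y => v (c • y)) Ω :=
    (hv.comp (contDiff_const_smul c)).contDiffOn.twiceDiffOn hΩ
  rw [pd_pd_mul hΩ hx hvc hg, pd_pd_comp_smul, pd_comp_smul, pd_comp_smul]
  ring

lemma pd_pd_sum_mul_comp_smul (hΩ : IsOpen Ω) (hx : x ∈ Ω) (c : ℝ)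
    {v g : Fin n → Fin n → (Fin n → ℝ) → ℝ}
    (hv : ∀ k l, ContDiff ℝ 2 (v k l)) (hg : ∀ k l, ContDiffOn ℝ 2 (g k l) Ω) :
    pd i (pd j (fun y => ∑ k, ∑ l, v k l (c • y) * g k l y)) x =
      ∑ k, ∑ l, (c ^ 2 * pd i (pd j (v k l)) (c • x) * g k l x
        + c * (pd j (v k l) (c • x) * pd i (g k l) x + pd i (v k l) (c • x) * pd j (g k l) x)
        + v k l (c • x) * pd i (pd j (g k l)) x) := by
  have hterm : ∀ k l, ContDiffOn ℝ 2 (fun y => v k l (c • y) * g k l y) Ω := fun k l =>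
    ((hv k l).comp (contDiff_const_smul c)).contDiffOn.mul (hg k l)
  rw [pd_pd_sum hΩ hx univ fun k _ => (ContDiffOn.sum fun l _ => hterm k l).twiceDiffOn hΩ]
  refine sum_congr rfl fun k _ => ?_
  rw [pd_pd_sum hΩ hx univ fun l _ => (hterm k l).twiceDiffOn hΩ]
  exact sum_congr rfl fun l _ => pd_pd_mul_comp_smul hΩ hx c (hv k l) ((hg k l).twiceDiffOn hΩ)

end TwoScale

section Contraction

variable {ι : Type*} [Fintype ι]

lemma sum_sum_sum_sum_comm (F : ι → ι → ι → ι → ℝ) :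
    ∑ i, ∑ j, ∑ k, ∑ l, F i j k l = ∑ k, ∑ l, ∑ i, ∑ j, F i j k l :=
  calc ∑ i, ∑ j, ∑ k, ∑ l, F i j k l = ∑ i, ∑ k, ∑ l, ∑ j, F i j k l :=
        sum_congr rfl fun _ _ => sum_comm.trans (sum_congr rfl fun _ _ => sum_comm)
    _ = ∑ k, ∑ l, ∑ i, ∑ j, F i j k l := sum_comm.trans (sum_congr rfl fun _ _ => sum_comm)

lemma contract_corrected_hessian_expand (ε : ℝ) (hε : ε ≠ 0) (a Huε Hu Hθ v : ι → ι → ℝ)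
    (Dv D3u : ι → ι → ι → ℝ) (Hv D4u : ι → ι → ι → ι → ℝ) :
    -(∑ i, ∑ j, a i j * (Huε i j - Hu i j - ε ^ 2 * ((∑ k, ∑ l,
        (ε⁻¹ ^ 2 * Hv i j k l * Hu k l + ε⁻¹ * (Dv j k l * D3u i k l + Dv i k l * D3u j k l)
          + v k l * D4u i j k l)) + Hθ i j)))
      = (∑ i, ∑ j, a i j * Hu i j) - (∑ i, ∑ j, a i j * Huε i j)
        + (∑ i, ∑ j, ∑ k, ∑ l, a i j * Hv i j k l * Hu k l)
        + ε * (∑ i, ∑ j, ∑ k, ∑ l, a i j * (Dv j k l * D3u i k l + Dv i k l * D3u j k l))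
        + ε ^ 2 * (∑ i, ∑ j, ∑ k, ∑ l, a i j * v k l * D4u i j k l)
        + ε ^ 2 * (∑ i, ∑ j, a i j * Hθ i j) := by
  simp only [mul_sum, ← sum_add_distrib, ← sum_sub_distrib, ← sum_neg_distrib]
  refine sum_congr rfl fun i _ => sum_congr rfl fun j _ => ?_
  have hS : a i j * ε ^ 2 * ∑ k, ∑ l, (ε⁻¹ ^ 2 * Hv i j k l * Hu k l
      + ε⁻¹ * (Dv j k l * D3u i k l + Dv i k l * D3u j k l) + v k l * D4u i j k l)
      = ∑ k, ∑ l, a i j * Hv i j k l * Hu k l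
        + ∑ k, ∑ l, ε * (a i j * (Dv j k l * D3u i k l + Dv i k l * D3u j k l))
        + ∑ k, ∑ l, ε ^ 2 * (a i j * v k l * D4u i j k l) := by
    simp only [mul_sum, ← sum_add_distrib]
    refine sum_congr rfl fun k _ => sum_congr rfl fun l _ => ?_
    field_simp
  linear_combination hS

lemma contract_corrected_hessian_eq (ε : ℝ) (hε : ε ≠ 0) (a abar Huε Hu Hθ v : ι → ι → ℝ)
    (Dv D3u : ι → ι → ι → ℝ) (Hv D4u : ι → ι → ι → ι → ℝ)
    (ha : ∀ i j, a i j = a j i)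
    (hHuε : ∑ i, ∑ j, a i j * Huε i j = ∑ i, ∑ j, abar i j * Hu i j)
    (hHv : ∀ k l, -(∑ i, ∑ j, a i j * Hv i j k l) = a k l - abar k l)
    (hHθ : ∑ i, ∑ j, a i j * Hθ i j = 0) :
    -(∑ i, ∑ j, a i j * (Huε i j - Hu i j - ε ^ 2 * ((∑ k, ∑ l,
        (ε⁻¹ ^ 2 * Hv i j k l * Hu k l + ε⁻¹ * (Dv j k l * D3u i k l + Dv i k l * D3u j k l)
          + v k l * D4u i j k l)) + Hθ i j)))
      = ε * ∑ i, ∑ j, ∑ k, ∑ l, a i j *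
          (2 * Dv i k l * D3u j k l + ε * v k l * D4u i j k l) := by
  have hcell : ∑ i, ∑ j, ∑ k, ∑ l, a i j * Hv i j k l * Hu k l
      = ∑ k, ∑ l, abar k l * Hu k l - ∑ k, ∑ l, a k l * Hu k l := by
    rw [sum_sum_sum_sum_comm, ← sum_sub_distrib]
    refine sum_congr rfl fun k _ => ?_
    rw [← sum_sub_distrib]
    refine sum_congr rfl fun l _ => ?_
    simp only [← sum_mul]
    linear_combination (-Hu k l) * hHv k l
  have hsymm : ∑ i, ∑ j, ∑ k, ∑ l, a i j * (Dv j k l * D3u i k l)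
      = ∑ i, ∑ j, ∑ k, ∑ l, a i j * (Dv i k l * D3u j k l) := by
    rw [sum_comm]
    simp only [ha]
  have hsplit : ∑ i, ∑ j, ∑ k, ∑ l, a i j * (2 * Dv i k l * D3u j k l + ε * v k l * D4u i j k l)
      = 2 * ∑ i, ∑ j, ∑ k, ∑ l, a i j * (Dv i k l * D3u j k l)
        + ε * ∑ i, ∑ j, ∑ k, ∑ l, a i j * v k l * D4u i j k l := by
    simp only [mul_sum, ← sum_add_distrib]
    exact sum_congr rfl fun i _ => sum_congr rfl fun j _ =>
      sum_congr rfl fun k _ => sum_congr rfl fun l _ => by ring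
  rw [contract_corrected_hessian_expand ε hε, hcell, hHuε, hHθ, hsplit]
  simp only [mul_add, sum_add_distrib, hsymm]
  ring

end Contraction

theorem corrected_equation_first_order_general {n : ℕ}
    (Ω : Set (Fin n → ℝ)) (hΩ : IsOpen Ω)
    (ε : ℝ) (hε : 0 < ε)
    (A : (Fin n → ℝ) → Fin n → Fin n → ℝ)
    (hAsymm : ∀ y i j, A y i j = A y j i)
    (Abar : Fin n → Fin n → ℝ)
    (f : (Fin n → ℝ) → ℝ)
    (uε u θε : (Fin n → ℝ) → ℝ)
    (huε : TwiceDiffOn uε Ω)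
    (huεeq : ∀ x ∈ Ω, -(∑ i, ∑ j, A (ε⁻¹ • x) i j * pd i (pd j uε) x) = f x)
    (hu : ContDiffOn ℝ 4 u Ω)
    (hueq : ∀ x ∈ Ω, -(∑ i, ∑ j, Abar i j * pd i (pd j u) x) = f x)
    (v : Fin n → Fin n → (Fin n → ℝ) → ℝ)
    (hv : ∀ k l, ContDiff ℝ 2 (v k l))
    (hveq : ∀ k l, ∀ y : Fin n → ℝ,
      -(∑ i, ∑ j, A y i j * pd i (pd j (v k l)) y) = A y k l - Abar k l)
    (hθ : TwiceDiffOn θε Ω)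
    (hθeq : ∀ x ∈ Ω, (∑ i, ∑ j, A (ε⁻¹ • x) i j * pd i (pd j θε) x) = 0) :
    ∀ x ∈ Ω,
      -(∑ i, ∑ j, A (ε⁻¹ • x) i j *
          pd i (pd j (fun y => uε y - u y -
            ε ^ 2 * ((∑ k, ∑ l, v k l (ε⁻¹ • y) * pd k (pd l u) y) + θε y))) x)
        = ε * ∑ i, ∑ j, ∑ k, ∑ l, A (ε⁻¹ • x) i j *
            (2 * pd i (v k l) (ε⁻¹ • x) * pd j (pd k (pd l u)) x
              + ε * v k l (ε⁻¹ • x) * pd i (pd j (pd k (pd l u))) x) := by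
  intro x hx
  have hu₂ : ∀ k l, ContDiffOn ℝ 2 (pd k (pd l u)) Ω := fun k l =>
    contDiffOn_pd hΩ (contDiffOn_pd (m := 3) hΩ hu)
  have hu' : TwiceDiffOn u Ω := (hu.of_le (by norm_num)).twiceDiffOn hΩ
  have hw : TwiceDiffOn (fun y => ∑ k, ∑ l, v k l (ε⁻¹ • y) * pd k (pd l u) y) Ω :=
    (ContDiffOn.sum fun k _ => ContDiffOn.sum fun l _ =>
      ((hv k l).comp (contDiff_const_smul ε⁻¹)).contDiffOn.mul (hu₂ k l)).twiceDiffOn hΩ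
  simp only [pd_pd_sub hΩ hx (huε.sub hΩ hu') ((hw.add hΩ hθ).const_mul _),
    pd_pd_sub hΩ hx huε hu', pd_pd_const_mul, pd_pd_add hΩ hx hw hθ,
    pd_pd_sum_mul_comp_smul hΩ hx ε⁻¹ hv hu₂]
  exact contract_corrected_hessian_eq ε hε.ne' (A (ε⁻¹ • x)) Abar
    (fun i j => pd i (pd j uε) x) (fun i j => pd i (pd j u) x) (fun i j => pd i (pd j θε) x)
    (fun k l => v k l (ε⁻¹ • x)) (fun i k l => pd i (v k l) (ε⁻¹ • x))
    (fun i k l => pd i (pd k (pd l u)) x) (fun i j k l => pd i (pd j (v k l)) (ε⁻¹ • x))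
    (fun i j k l => pd i (pd j (pd k (pd l u))) x) (hAsymm _)
    (neg_inj.mp ((huεeq x hx).trans (hueq x hx).symm)) (fun k l => hveq k l _) (hθeq x hx)

/-- The identity `−A(x/ε):D²(uᵋ − u − φᵋ) = ε ∑ a_{ij}(x/ε)[2 ∂_i v^{kl}(x/ε) ∂³_{jkl}u
+ ε v^{kl}(x/ε) ∂⁴_{ijkl}u]` on `Ω`, where
`φᵋ = ε²(∑ v^{kl}(·/ε) ∂²_{kl}u + θᵋ)`. -/
theorem corrected_equation_first_order {n : ℕ} (hn : 1 ≤ n)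
    (Ω : Set (Fin n → ℝ)) (hΩ : IsOpen Ω)
    (ε : ℝ) (hε : 0 < ε)
    (A : (Fin n → ℝ) → Fin n → Fin n → ℝ)
    (hAsymm : ∀ y i j, A y i j = A y j i)
    (Abar : Fin n → Fin n → ℝ) (hAbarSymm : ∀ i j, Abar i j = Abar j i)
    (f : (Fin n → ℝ) → ℝ)
    (uε u θε : (Fin n → ℝ) → ℝ)
    (huε : TwiceDiffOn uε Ω)
    (huεeq : ∀ x ∈ Ω, -(∑ i, ∑ j, A (ε⁻¹ • x) i j * pd i (pd j uε) x) = f x)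
    (hu : ContDiffOn ℝ 4 u Ω)
    (hueq : ∀ x ∈ Ω, -(∑ i, ∑ j, Abar i j * pd i (pd j u) x) = f x)
    (v : Fin n → Fin n → (Fin n → ℝ) → ℝ)
    (hv : ∀ k l, ContDiff ℝ 2 (v k l))
    (hveq : ∀ k l, ∀ y : Fin n → ℝ,
      -(∑ i, ∑ j, A y i j * pd i (pd j (v k l)) y) = A y k l - Abar k l)
    (hθ : TwiceDiffOn θε Ω)
    (hθeq : ∀ x ∈ Ω, (∑ i, ∑ j, A (ε⁻¹ • x) i j * pd i (pd j θε) x) = 0) :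
    ∀ x ∈ Ω,
      -(∑ i, ∑ j, A (ε⁻¹ • x) i j *
          pd i (pd j (fun y => uε y - u y -
            ε ^ 2 * ((∑ k, ∑ l, v k l (ε⁻¹ • y) * pd k (pd l u) y) + θε y))) x)
        = ε * ∑ i, ∑ j, ∑ k, ∑ l, A (ε⁻¹ • x) i j *
            (2 * pd i (v k l) (ε⁻¹ • x) * pd j (pd k (pd l u)) x
              + ε * v k l (ε⁻¹ • x) * pd i (pd j (pd k (pd l u))) x) :=
  corrected_equation_first_order_general Ω hΩ ε hε A hAsymm Abar f uε u θε huε huεeq hu hueq v hv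
    hveq hθ hθeq
end
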